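/- arXiv:2101.03589 — 4 statements merged into one kernel-verified Lean document; each statement's English description precedes it below -/
import Mathlib

section
/- Realization of simple products over ℝ: for any symmetric matrix B ∈ ℝ^{m×m}, there exist N ∈ ℕ and symmetric matrices A₀, A₁, A₂ ∈ ℝ^{N×N} such that the affine pencil A(u,v) = A₀ + uA₁ + vA₂, partitioned as a 2×2 block matrix with m×m (1,1)-block, has a constant invertible (2,2)-block A₂₂ and Schur complement A(u,v)/A₂₂ = uvB for all u, v ∈ ℝ. -/
/-!
Take the constant block `C = -J` with `J = [[0, 1], [1, 0]]`, so that `C⁻¹ = C`, and put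
`uP + vQ` and its transpose off the diagonal. The Schur complement is then the quadratic form
`-(uP + vQ) C⁻¹ (uP + vQ)ᵀ` in `(u, v)`. For `P = [B/2, 0]` and `Q = [0, 1]` its pure terms
`P J Pᵀ`, `Q J Qᵀ` vanish and its mixed term is `(B + Bᵀ)/2 = B`.
-/

open Matrix

variable {α κ R : Type*} [CommRing R]

theorem smul_add_smul_mul_mul_transpose [Fintype κ] (P Q : Matrix α κ R) (M : Matrix κ κ R)
    (u v : R) :
    (u • P + v • Q) * M * (u • P + v • Q)ᵀ =
      (u * u) • (P * M * Pᵀ) + (u * v) • (P * M * Qᵀ + Q * M * Pᵀ) + (v * v) • (Q * M * Qᵀ) := by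
  simp only [transpose_add, transpose_smul, Matrix.add_mul, Matrix.mul_add, Matrix.smul_mul,
    Matrix.mul_smul, smul_add, smul_smul, mul_comm v u]
  abel

section

variable [Fintype κ] [DecidableEq κ]

def IsSimpleProductPencil (B : Matrix α α R) (A₀ A₁ A₂ : Matrix (α ⊕ κ) (α ⊕ κ) R) : Prop :=
  A₀.IsSymm ∧ A₁.IsSymm ∧ A₂.IsSymm ∧ A₁.toBlocks₂₂ = 0 ∧ A₂.toBlocks₂₂ = 0 ∧
    IsUnit A₀.toBlocks₂₂.det ∧
    ∀ u v : R,
      (A₀ + u • A₁ + v • A₂).toBlocks₁₁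
          - (A₀ + u • A₁ + v • A₂).toBlocks₁₂ * A₀.toBlocks₂₂⁻¹ * (A₀ + u • A₁ + v • A₂).toBlocks₂₁
        = (u * v) • B

theorem IsSimpleProductPencil.submatrix {κ' : Type*} [Fintype κ'] [DecidableEq κ']
    {B : Matrix α α R} {A₀ A₁ A₂ : Matrix (α ⊕ κ) (α ⊕ κ) R}
    (h : IsSimpleProductPencil B A₀ A₁ A₂) (e : κ' ≃ κ) :
    IsSimpleProductPencil B (A₀.submatrix (Sum.map id e) (Sum.map id e))
      (A₁.submatrix (Sum.map id e) (Sum.map id e)) (A₂.submatrix (Sum.map id e) (Sum.map id e)) := by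
  obtain ⟨h₀, h₁, h₂, h₁₂₂, h₂₂₂, hdet, hschur⟩ := h
  refine ⟨h₀.submatrix _, h₁.submatrix _, h₂.submatrix _, ?_, ?_, ?_, fun u v => ?_⟩
  · exact congrArg (·.submatrix e e) h₁₂₂
  · exact congrArg (·.submatrix e e) h₂₂₂
  · change IsUnit (A₀.toBlocks₂₂.submatrix e e).det
    rwa [det_submatrix_equiv_self]
  · set A := A₀ + u • A₁ + v • A₂
    change A.toBlocks₁₁ - A.toBlocks₁₂.submatrix id e * (A₀.toBlocks₂₂.submatrix e e)⁻¹
      * A.toBlocks₂₁.submatrix e id = _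
    rw [inv_submatrix_equiv, submatrix_mul_equiv _ _ _ e, submatrix_mul_equiv _ _ _ e,
      submatrix_id_id]
    exact hschur u v

theorem isSimpleProductPencil_fromBlocks {B : Matrix α α R} {C : Matrix κ κ R}
    {P Q : Matrix α κ R}
    (hC : C.IsSymm) (hCdet : IsUnit C.det) (hP : P * C⁻¹ * Pᵀ = 0) (hQ : Q * C⁻¹ * Qᵀ = 0)
    (hPQ : P * C⁻¹ * Qᵀ + Q * C⁻¹ * Pᵀ = -B) :
    IsSimpleProductPencil B (fromBlocks 0 0 0 C) (fromBlocks 0 P Pᵀ 0) (fromBlocks 0 Q Qᵀ 0) := by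
  refine ⟨.fromBlocks isSymm_zero rfl hC, .fromBlocks isSymm_zero rfl isSymm_zero,
    .fromBlocks isSymm_zero rfl isSymm_zero, rfl, rfl, hCdet, fun u v => ?_⟩
  have hpencil : fromBlocks 0 0 0 C + u • fromBlocks 0 P Pᵀ 0 + v • fromBlocks 0 Q Qᵀ 0
      = fromBlocks 0 (u • P + v • Q) (u • P + v • Q)ᵀ C := by
    simp only [fromBlocks_smul, fromBlocks_add, transpose_add, transpose_smul, smul_zero,
      add_zero, zero_add]
  rw [hpencil, toBlocks_fromBlocks₁₁, toBlocks_fromBlocks₁₂, toBlocks_fromBlocks₂₁,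
    toBlocks_fromBlocks₂₂, smul_add_smul_mul_mul_transpose, hP, hQ, hPQ]
  simp

end

section Hyperbolic

open LieAlgebra.Orthogonal

variable [Fintype α] [DecidableEq α]

theorem fromCols_mul_JD_mul_transpose_fromCols {β : Type*} (X Y X' Y' : Matrix β α R) :
    fromCols X Y * JD α R * (fromCols X' Y')ᵀ = X * Y'ᵀ + Y * X'ᵀ := by
  rw [JD, fromCols_mul_fromBlocks, transpose_fromCols, fromCols_mul_fromRows]
  simp [add_comm]

theorem JD_mul_self : JD α R * JD α R = 1 := by
  simp [JD, fromBlocks_multiply, fromBlocks_one]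

theorem isSimpleProductPencil_hyperbolic [Invertible (2 : R)] {B : Matrix α α R} (hB : B.IsSymm) :
    IsSimpleProductPencil B (fromBlocks 0 0 0 (-JD α R))
      (fromBlocks 0 (fromCols (⅟(2 : R) • B) 0) (fromCols (⅟(2 : R) • B) 0)ᵀ 0)
      (fromBlocks 0 (fromCols 0 1) (fromCols 0 1)ᵀ 0) := by
  have hinv : (-JD α R)⁻¹ = -JD α R := inv_eq_right_inv (by rw [neg_mul_neg, JD_mul_self])
  apply isSimpleProductPencil_fromBlocks
  · exact (IsSymm.fromBlocks isSymm_zero transpose_one isSymm_zero).neg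
  · exact isUnit_det_of_right_inverse (by rw [neg_mul_neg, JD_mul_self])
  all_goals
    simp only [hinv, Matrix.mul_neg, Matrix.neg_mul, fromCols_mul_JD_mul_transpose_fromCols]
  · simp
  · simp
  · rw [transpose_smul, hB.eq]
    simp only [transpose_one, Matrix.mul_one, Matrix.one_mul, Matrix.zero_mul, add_zero, zero_add]
    rw [← neg_add, ← add_smul, invOf_two_add_invOf_two, one_smul]

end Hyperbolic

theorem realization_of_simple_products {m : ℕ}
    (B : Matrix (Fin m) (Fin m) ℝ) (hBs : B.IsSymm) :
    ∃ (N : ℕ) (A0 A1 A2 : Matrix (Fin m ⊕ Fin N) (Fin m ⊕ Fin N) ℝ),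
      A0.IsSymm ∧ A1.IsSymm ∧ A2.IsSymm ∧
      A1.toBlocks₂₂ = 0 ∧ A2.toBlocks₂₂ = 0 ∧
      IsUnit (A0.toBlocks₂₂).det ∧
      ∀ u v : ℝ,
        (A0 + u • A1 + v • A2).toBlocks₁₁
          - (A0 + u • A1 + v • A2).toBlocks₁₂ * (A0.toBlocks₂₂)⁻¹
            * (A0 + u • A1 + v • A2).toBlocks₂₁
        = (u * v) • B :=
  ⟨m + m, _, _, _, (isSimpleProductPencil_hyperbolic hBs).submatrix finSumFinEquiv.symm⟩
end

section
/- Failure over finite fields: let F be a finite field with elements 0, λ₁, …, λ_{q−1} (q = |F|), and let B = diag(0, λ₁, …, λ_{q−1}) ∈ F^{q×q}. Then B is symmetric, not invertible, and for every nonzero scalar λ₀ ∈ F, the matrix B − λ₀ I_q is not invertible. -/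
theorem failure_over_finite_fields {F : Type*} [Field F] [Fintype F] [DecidableEq F] :
    (Matrix.diagonal (id : F → F)).IsSymm ∧
    ¬ IsUnit (Matrix.diagonal (id : F → F)).det ∧
    ∀ l0 : F, l0 ≠ 0 →
      ¬ IsUnit (Matrix.diagonal (id : F → F) - l0 • (1 : Matrix F F F)).det := by
  refine ⟨Matrix.isSymm_diagonal _, ?_, ?_⟩
  · rw [Matrix.det_diagonal]
    simp only [id]
    rw [Finset.prod_eq_zero (Finset.mem_univ (0 : F)) rfl]
    exact not_isUnit_zero
  · intro l0 _
    have h : (Matrix.diagonal (id : F → F) - l0 • (1 : Matrix F F F)) =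
        Matrix.diagonal (fun x : F => x - l0) := by
      ext i j
      by_cases hij : i = j <;>
        simp [Matrix.diagonal, Matrix.one_apply, hij, sub_eq_iff_eq_add]
    rw [h, Matrix.det_diagonal]
    rw [Finset.prod_eq_zero (Finset.mem_univ l0) (by simp)]
    exact not_isUnit_zero
end

section
/- Substitution lemma: let F be a field of characteristic ≠ 2. If q(z₁,…,zₙ) ∈ F[z] has a symmetric determinantal representation, and p is obtained from q by replacing some variable z_k by the product uv of two new variables, then p also has a symmetric determinantal representation (as a polynomial in z₁,…,z_{k−1},z_{k+1},…,zₙ,u,v). -/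
/-!
Write `q = det (M + z_k A_k)`, where `M` collects the other terms of the pencil. Border `M`
by `N = (u A_k, -(v/2) I)` and `Nᵀ`, with the involution `S = [[0, I], [I, 0]]` in the corner.
This is a symmetric pencil in the new variables, and its Schur complement
`M - N S Nᵀ = M + uv A_k` has determinant `p`, so the bordered pencil has determinant
`det S * p`. As `det S = ±1` is a nonzero constant, a further `1 × 1` block removes it.
-/

open MvPolynomial in
/-- A polynomial in variables indexed by `σ` has a symmetric determinantal
representation over `F`. -/
def HasSymmDetRep {F : Type*} [Field F] {σ : Type*} [Fintype σ]
    (p : MvPolynomial σ F) : Prop :=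
  ∃ (m : ℕ) (A0 : Matrix (Fin m) (Fin m) F) (A : σ → Matrix (Fin m) (Fin m) F),
    A0.IsSymm ∧ (∀ i, (A i).IsSymm) ∧
    p = Matrix.det (A0.map C + ∑ i, (X i : MvPolynomial σ F) • (A i).map C)

open Matrix MvPolynomial

section LinearPencil

variable {R : Type*} [CommSemiring R] {σ : Type*} [Fintype σ] {l m n o : Type*}

/-- `HasSymmDetRep p` unfolds to `p = det (linearPencil A0 A)` with symmetric `A0`, `A i`. -/
noncomputable def linearPencil (A0 : Matrix m n R) (A : σ → Matrix m n R) :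
    Matrix m n (MvPolynomial σ R) :=
  A0.map C + ∑ i, (X i : MvPolynomial σ R) • (A i).map C

theorem linearPencil_zero_right (A0 : Matrix m n R) :
    linearPencil A0 (fun _ : σ => (0 : Matrix m n R)) = A0.map C := by
  simp [linearPencil]

theorem linearPencil_zero_pi_single [DecidableEq σ] (j : σ) (B : Matrix m n R) :
    linearPencil 0 (Pi.single j B) = (X j : MvPolynomial σ R) • B.map C := by
  rw [linearPencil, Finset.sum_eq_single j (fun i _ hi => by simp [hi]) (by simp)]
  simp

theorem linearPencil_submatrix (A0 : Matrix m n R) (A : σ → Matrix m n R) (e₁ : l → m)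
    (e₂ : o → n) :
    linearPencil (A0.submatrix e₁ e₂) (fun i => (A i).submatrix e₁ e₂) =
      (linearPencil A0 A).submatrix e₁ e₂ := by
  ext : 2
  simp [linearPencil, Matrix.sum_apply]

theorem linearPencil_fromCols (A0 : Matrix m n R) (B0 : Matrix m o R) (A : σ → Matrix m n R)
    (B : σ → Matrix m o R) :
    linearPencil (fromCols A0 B0) (fun i => fromCols (A i) (B i)) =
      fromCols (linearPencil A0 A) (linearPencil B0 B) := by
  ext _ (_ | _) : 2 <;> simp [linearPencil, Matrix.sum_apply]

theorem linearPencil_fromBlocks_zero_zero (A0 : Matrix n n R) (D0 : Matrix o o R)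
    (A : σ → Matrix n n R) (D : σ → Matrix o o R) :
    linearPencil (fromBlocks A0 0 0 D0) (fun i => fromBlocks (A i) 0 0 (D i)) =
      fromBlocks (linearPencil A0 A) 0 0 (linearPencil D0 D) := by
  ext (_ | _) (_ | _) : 2 <;> simp [linearPencil, Matrix.sum_apply]

theorem linearPencil_fromBlocks_transpose (A0 : Matrix n n R) (D0 : Matrix o o R)
    (A : σ → Matrix n n R) (B : σ → Matrix n o R) :
    linearPencil (fromBlocks A0 0 0 D0) (fun i => fromBlocks (A i) (B i) (B i)ᵀ 0) =
      fromBlocks (linearPencil A0 A) (linearPencil 0 B) (linearPencil 0 B)ᵀ (D0.map C) := by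
  ext (_ | _) (_ | _) : 2 <;> simp [linearPencil, Matrix.sum_apply]

theorem linearPencil_map_aeval {τ : Type*} (A0 : Matrix m n R) (A : σ → Matrix m n R)
    (g : σ → MvPolynomial τ R) :
    (linearPencil A0 A).map (aeval g) = A0.map C + ∑ i, g i • (A i).map C := by
  ext : 2
  simp [linearPencil, Matrix.sum_apply]

theorem linearPencil_map_aeval_update [DecidableEq σ] {τ : Type*} [Fintype τ]
    (A0 : Matrix m n R) (A : σ → Matrix m n R) (k : σ) (r : MvPolynomial (σ ⊕ τ) R) :
    (linearPencil A0 A).map (aeval (Function.update (fun i => X (Sum.inl i)) k r)) =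
      linearPencil A0 (Sum.elim (Function.update A k 0) 0) + r • (A k).map C := by
  have hsummand (i : σ) : Function.update (fun i => X (Sum.inl i)) k r i • (A i).map C =
      (X (Sum.inl i) : MvPolynomial (σ ⊕ τ) R) • (Function.update A k 0 i).map C +
        (if i = k then r • (A k).map C else 0 : Matrix m n (MvPolynomial (σ ⊕ τ) R)) := by
    rcases eq_or_ne i k with rfl | h <;> simp [*]
  rw [linearPencil_map_aeval, Finset.sum_congr rfl fun i _ => hsummand i,
    Finset.sum_add_distrib, Finset.sum_ite_eq', if_pos (Finset.mem_univ k), ← add_assoc]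
  simp [linearPencil, Fintype.sum_sum_type]

end LinearPencil

section SchurComplement

variable {R m : Type*} [CommRing R] [Fintype m] [DecidableEq m]

theorem fromBlocks_zero_one_one_zero_mul_self :
    (fromBlocks 0 1 1 0 : Matrix (m ⊕ m) (m ⊕ m) R) * fromBlocks 0 1 1 0 = 1 := by
  simp [fromBlocks_multiply, ← fromBlocks_one]

theorem det_fromBlocks_fromCols_swap (M X Y : Matrix m m R) :
    (fromBlocks M (fromCols X Y) (fromCols X Y)ᵀ (fromBlocks 0 1 1 0)).det =
      (fromBlocks 0 1 1 0 : Matrix (m ⊕ m) (m ⊕ m) R).det *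
        (M - (Y * Xᵀ + X * Yᵀ)).det := by
  let _ : Invertible (fromBlocks 0 1 1 0 : Matrix (m ⊕ m) (m ⊕ m) R) :=
    ⟨_, fromBlocks_zero_one_one_zero_mul_self, fromBlocks_zero_one_one_zero_mul_self⟩
  rw [det_fromBlocks₂₂, show ⅟(fromBlocks 0 1 1 0 : Matrix (m ⊕ m) (m ⊕ m) R) =
    fromBlocks 0 1 1 0 from rfl, fromCols_mul_fromBlocks, transpose_fromCols, fromCols_mul_fromRows]
  simp

theorem det_fromBlocks_fromCols_smul_swap (M A : Matrix m m R) (hA : A.IsSymm) (x y c : R)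
    (hc : 2 * c = -1) :
    (fromBlocks M (fromCols (x • A) (y • c • (1 : Matrix m m R)))
        (fromCols (x • A) (y • c • 1))ᵀ (fromBlocks 0 1 1 0)).det =
      (fromBlocks 0 1 1 0 : Matrix (m ⊕ m) (m ⊕ m) R).det * (M + (x * y) • A).det := by
  have cross : (y • c • (1 : Matrix m m R)) * (x • A)ᵀ + (x • A) * (y • c • 1)ᵀ =
      -((x * y) • A) := by
    simp only [transpose_smul, transpose_one, hA.eq, Matrix.smul_mul, Matrix.mul_smul,
      Matrix.one_mul, Matrix.mul_one, smul_smul, ← add_smul, ← neg_smul]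
    congr 1
    linear_combination x * y * hc
  rw [det_fromBlocks_fromCols_swap, cross, sub_neg_eq_add]

end SchurComplement

section HasSymmDetRep

variable {F : Type*} [Field F] {σ : Type*} [Fintype σ]

theorem HasSymmDetRep.of_linearPencil {ι : Type*} [Fintype ι] [DecidableEq ι]
    {B0 : Matrix ι ι F} {B : σ → Matrix ι ι F} (h0 : B0.IsSymm) (h : ∀ j, (B j).IsSymm) :
    HasSymmDetRep (linearPencil B0 B).det := by
  let e := (Fintype.equivFin ι).symm
  refine ⟨_, B0.submatrix e e, fun j => (B j).submatrix e e, h0.submatrix e,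
    fun j => (h j).submatrix e, ?_⟩
  change _ = (linearPencil _ _).det
  rw [linearPencil_submatrix, det_submatrix_equiv_self]

theorem HasSymmDetRep.C_mul {p : MvPolynomial σ F} (hp : HasSymmDetRep p) (c : F) :
    HasSymmDetRep (C c * p) := by
  obtain ⟨m, A0, A, h0, h, rfl⟩ := hp
  change HasSymmDetRep (C c * (linearPencil A0 A).det)
  convert HasSymmDetRep.of_linearPencil (B0 := fromBlocks (c • 1 : Matrix Unit Unit F) 0 0 A0)
    (B := fun i => fromBlocks 0 0 0 (A i))
    (isSymm_one.smul c |>.fromBlocks transpose_zero h0)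
    (fun i => isSymm_zero.fromBlocks transpose_zero (h i)) using 1
  rw [linearPencil_fromBlocks_zero_zero, linearPencil_zero_right, det_fromBlocks_zero₂₁]
  simp

theorem HasSymmDetRep.of_C_mul {p : MvPolynomial σ F} {c : F} (hc : c ≠ 0)
    (h : HasSymmDetRep (C c * p)) : HasSymmDetRep p := by
  simpa [← mul_assoc, ← map_mul, hc] using h.C_mul c⁻¹

theorem HasSymmDetRep.aeval_update_X_mul_X [DecidableEq σ] (h2 : (2 : F) ≠ 0)
    {q : MvPolynomial σ F} (hq : HasSymmDetRep q) (k : σ) :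
    HasSymmDetRep (aeval (Function.update (fun i => X (Sum.inl i)) k
      (X (Sum.inr 0) * X (Sum.inr 1) : MvPolynomial (σ ⊕ Fin 2) F)) q) := by
  obtain ⟨m, A0, A, hA0, hA, rfl⟩ := hq
  set u : MvPolynomial (σ ⊕ Fin 2) F := X (Sum.inr 0)
  set v : MvPolynomial (σ ⊕ Fin 2) F := X (Sum.inr 1)
  set g := Function.update (fun i => X (Sum.inl i)) k (u * v)
  change HasSymmDetRep (aeval g (linearPencil A0 A).det)
  set S : Matrix (Fin m ⊕ Fin m) (Fin m ⊕ Fin m) F := fromBlocks 0 1 1 0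
  -- In the notation of the header, `A'`, `P`, `Q` are the coefficients of `M`, `u A_k`, `-(v/2) I`.
  set A' : σ ⊕ Fin 2 → Matrix (Fin m) (Fin m) F := Sum.elim (Function.update A k 0) 0
  set P : σ ⊕ Fin 2 → Matrix (Fin m) (Fin m) F := Pi.single (Sum.inr 0) (A k)
  set Q : σ ⊕ Fin 2 → Matrix (Fin m) (Fin m) F := Pi.single (Sum.inr 1) ((-(2 : F)⁻¹) • 1)
  have hA' : ∀ j, (A' j).IsSymm := by
    have := (Function.forall_update_iff A (a := k) (p := fun _ M => M.IsSymm)).2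
      ⟨isSymm_zero, fun i _ => hA i⟩
    rintro (i | t)
    exacts [this i, isSymm_zero]
  refine HasSymmDetRep.of_C_mul (c := S.det) (isUnit_det_of_left_inverse
    (fromBlocks_zero_one_one_zero_mul_self (m := Fin m) (R := F))).ne_zero ?_
  convert HasSymmDetRep.of_linearPencil (B0 := fromBlocks A0 0 0 S)
    (B := fun j => fromBlocks (A' j) (fromCols (P j) (Q j)) (fromCols (P j) (Q j))ᵀ 0)
    (hA0.fromBlocks transpose_zero (isSymm_zero.fromBlocks transpose_one isSymm_zero))
    (fun j => (hA' j).fromBlocks rfl isSymm_zero) using 1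
  set c : MvPolynomial (σ ⊕ Fin 2) F := C (-(2 : F)⁻¹)
  have hc : 2 * c = -1 := by
    rw [← map_ofNat C 2, ← map_mul, mul_neg, mul_inv_cancel₀ h2, map_neg, map_one]
  have hN : linearPencil 0 (fun j => fromCols (P j) (Q j)) =
      fromCols (u • (A k).map C) (v • c • 1) := by
    rw [← fromCols_zero, linearPencil_fromCols, linearPencil_zero_pi_single,
      linearPencil_zero_pi_single, Matrix.map_smul' _ _ _ (map_mul C),
      Matrix.map_one _ (map_zero C) (map_one C)]
  have hS : S.map (C : F →+* MvPolynomial (σ ⊕ Fin 2) F) = fromBlocks 0 1 1 0 := by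
    simp [S, fromBlocks_map, Matrix.map_one _ (map_zero C) (map_one C)]
  rw [linearPencil_fromBlocks_transpose, hN, hS,
    det_fromBlocks_fromCols_smul_swap _ _ ((hA k).map C) _ _ _ hc, ← hS,
    ← RingHom.mapMatrix_apply, ← RingHom.map_det, AlgHom.map_det, AlgHom.mapMatrix_apply,
    linearPencil_map_aeval_update]

end HasSymmDetRep

open MvPolynomial in
theorem substitution_lemma {F : Type*} [Field F] (h2 : (2 : F) ≠ 0) {n : ℕ}
    (q : MvPolynomial (Fin n) F) (hq : HasSymmDetRep q) (k : Fin n) :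
    HasSymmDetRep
      (MvPolynomial.aeval (fun i : Fin n =>
          if i = k then
            (X (Sum.inr 0) * X (Sum.inr 1) : MvPolynomial (Fin n ⊕ Fin 2) F)
          else X (Sum.inl i)) q) := by
  have hsubst : (fun i : Fin n => if i = k then
      (X (Sum.inr 0) * X (Sum.inr 1) : MvPolynomial (Fin n ⊕ Fin 2) F) else X (Sum.inl i)) =
      Function.update (fun i => X (Sum.inl i)) k (X (Sum.inr 0) * X (Sum.inr 1)) := by
    funext i
    simp [Function.update_apply]
  rw [hsubst]
  exact hq.aeval_update_X_mul_X h2 k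
end

section
/- Polynomial realization: every polynomial p ∈ F[z₁,…,zₙ] over a field F can be obtained from some affine linear polynomial q (in a possibly larger set of variables) by applying a finite sequence of simple product substitutions, each of which replaces one variable of the current polynomial by a product of two variables. -/
/-!
A monomial `c • x₁ ⋯ x_d` with `d ≥ 2` arises from `c • y`, for a fresh variable `y`, by
the substitutions `y ↦ y xⱼ` for `j = 3, …, d` followed by `y ↦ x₁ x₂`; monomials of degree
at most one are already affine. Substitutions only ever replace fresh variables, so
realizations of two polynomials on disjoint sets of fresh variables do not interfere, and
their sum is realized by the sum of the affine polynomials and the concatenated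
substitution sequences.
-/

open MvPolynomial

lemma MvPolynomial.prod_map_X_toList_toMultiset {R σ : Type*} [CommSemiring R]
    (m : σ →₀ ℕ) :
    (m.toMultiset.toList.map X).prod = (monomial m 1 : MvPolynomial σ R) := by
  rw [← Multiset.prod_coe, ← Multiset.map_coe, Multiset.coe_toList, Finsupp.toMultiset_map,
    Finsupp.prod_toMultiset, Finsupp.prod_mapDomain_index (fun _ => pow_zero _)
      (fun _ _ _ => pow_add _ _ _), monomial_eq, C_1, one_mul]

namespace ProductSubst

lemma exists_fst_eq_inr_of_mem_map_sumMap {σ ι ι' : Type*} (f : ι → ι')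
    {L : List ((σ ⊕ ι) × (σ ⊕ ι) × (σ ⊕ ι))} (hL : ∀ t ∈ L, ∃ j, t.1 = Sum.inr j)
    {t : (σ ⊕ ι') × (σ ⊕ ι') × (σ ⊕ ι')}
    (ht : t ∈ L.map (Prod.map (Sum.map id f) (Prod.map (Sum.map id f) (Sum.map id f)))) :
    ∃ j, t.1 = Sum.inr (f j) := by
  obtain ⟨s, hs, rfl⟩ := List.mem_map.1 ht
  obtain ⟨j, hj⟩ := hL s hs
  exact ⟨j, by simp [hj]⟩

variable {R σ τ : Type*} [CommSemiring R] [DecidableEq σ]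

noncomputable def step (t : σ × σ × σ) : MvPolynomial σ R →ₐ[R] MvPolynomial σ R :=
  aeval fun i => if i = t.1 then X t.2.1 * X t.2.2 else X i

noncomputable def seq : List (σ × σ × σ) → MvPolynomial σ R →ₐ[R] MvPolynomial σ R
  | [] => AlgHom.id R _
  | t :: L => (seq L).comp (step t)

lemma seq_apply_eq_foldl (L : List (σ × σ × σ)) (q : MvPolynomial σ R) :
    seq L q = L.foldl (fun r t => step t r) q := by
  induction L generalizing q with
  | nil => rfl
  | cons t L ih => exact ih _

lemma seq_append (L₁ L₂ : List (σ × σ × σ)) :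
    (seq (L₁ ++ L₂) : MvPolynomial σ R →ₐ[R] _) = (seq L₂).comp (seq L₁) := by
  induction L₁ with
  | nil => rfl
  | cons t L ih => rw [List.cons_append, seq, seq, ih, AlgHom.comp_assoc]

lemma seq_singleton (t : σ × σ × σ) : (seq [t] : MvPolynomial σ R →ₐ[R] _) = step t :=
  AlgHom.id_comp _

lemma step_X_of_ne {t : σ × σ × σ} {j : σ} (h : j ≠ t.1) :
    step t (X j : MvPolynomial σ R) = X j := by
  simp [step, h]

lemma seq_X_of_ne {L : List (σ × σ × σ)} {j : σ} (h : ∀ t ∈ L, j ≠ t.1) :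
    seq L (X j : MvPolynomial σ R) = X j := by
  induction L with
  | nil => rfl
  | cons t L ih =>
    rw [seq, AlgHom.comp_apply, step_X_of_ne (h t List.mem_cons_self)]
    exact ih fun s hs => h s (List.mem_cons_of_mem t hs)

lemma seq_rename_of_forall_notMem_range {L : List (σ × σ × σ)} {e : τ → σ}
    (h : ∀ t ∈ L, t.1 ∉ Set.range e) (q : MvPolynomial τ R) :
    seq L (rename e q) = rename e q := by
  rw [← AlgHom.comp_apply]
  congr 1
  refine algHom_ext fun i => ?_
  rw [AlgHom.comp_apply, rename_X]
  exact seq_X_of_ne fun t ht hi => h t ht ⟨i, hi⟩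

lemma step_comp_rename [DecidableEq τ] {e : σ → τ} (he : e.Injective) (t : σ × σ × σ) :
    (step (Prod.map e (Prod.map e e) t)).comp (rename e)
      = (rename e).comp (step t : MvPolynomial σ R →ₐ[R] _) := by
  refine algHom_ext fun i => ?_
  by_cases hi : i = t.1
  · simp [step, hi]
  · simp [step, hi, he.ne hi]

lemma seq_map_comp_rename [DecidableEq τ] {e : σ → τ} (he : e.Injective)
    (L : List (σ × σ × σ)) :
    (seq (L.map (Prod.map e (Prod.map e e)))).comp (rename e)
      = (rename e).comp (seq L : MvPolynomial σ R →ₐ[R] _) := by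
  induction L with
  | nil => rfl
  | cons t L ih =>
    rw [List.map_cons, seq, seq, AlgHom.comp_assoc, step_comp_rename he, ← AlgHom.comp_assoc, ih,
      AlgHom.comp_assoc]

lemma seq_map_rename [DecidableEq τ] {e : σ → τ} (he : e.Injective) (L : List (σ × σ × σ))
    (q : MvPolynomial σ R) :
    seq (L.map (Prod.map e (Prod.map e e))) (rename e q) = rename e (seq L q) :=
  AlgHom.congr_fun (seq_map_comp_rename he L) q

lemma seq_map_X_self_mul {y : σ} {xs : List σ} (hy : y ∉ xs) :
    seq (xs.map fun x => (y, y, x)) (X y : MvPolynomial σ R) = X y * (xs.map X).prod := by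
  induction xs with
  | nil => simp [seq]
  | cons x xs ih =>
    obtain ⟨hyx, hys⟩ := List.ne_and_not_mem_of_not_mem_cons hy
    have hx : seq (xs.map fun x => (y, y, x)) (X x : MvPolynomial σ R) = X x :=
      seq_X_of_ne (by simpa using fun _ _ => Ne.symm hyx)
    simp only [List.map_cons, seq, AlgHom.comp_apply, step, aeval_X, if_true, map_mul, ih hys, hx,
      List.prod_cons]
    ring

def Realizable (p : MvPolynomial σ R) : Prop :=
  ∃ (k : ℕ) (q : MvPolynomial (σ ⊕ Fin k) R)
    (L : List ((σ ⊕ Fin k) × (σ ⊕ Fin k) × (σ ⊕ Fin k))),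
    q.totalDegree ≤ 1 ∧ (∀ t ∈ L, ∃ j, t.1 = Sum.inr j) ∧ seq L q = rename Sum.inl p

lemma realizable_of_totalDegree_le_one {p : MvPolynomial σ R} (hp : p.totalDegree ≤ 1) :
    Realizable p :=
  ⟨0, rename Sum.inl p, [], (totalDegree_rename_le _ _).trans hp, by simp, rfl⟩

lemma realizable_C_mul_prod_X (a : R) (u v : σ) (xs : List σ) :
    Realizable (C a * ((u :: v :: xs).map X).prod) := by
  set y : σ ⊕ Fin 1 := Sum.inr 0
  refine ⟨1, C a * X y,
    (xs.map fun x => (y, y, Sum.inl x)) ++ [(y, Sum.inl u, Sum.inl v)], ?_, ?_, ?_⟩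
  · rw [C_mul_X_eq_monomial]
    exact (totalDegree_monomial_le _ _).trans (by simp)
  · simp [y]
  · have hchain : seq (xs.map fun x => (y, y, Sum.inl x)) (X y : MvPolynomial (σ ⊕ Fin 1) R)
        = X y * rename Sum.inl (xs.map X).prod := by
      simpa [List.map_map, Function.comp_def, map_list_prod] using
        seq_map_X_self_mul (R := R) (y := y) (xs := xs.map Sum.inl) (by simp [y])
    have hfix : step (y, Sum.inl u, Sum.inl v) (rename Sum.inl (xs.map X).prod)
        = (rename Sum.inl (xs.map X).prod : MvPolynomial (σ ⊕ Fin 1) R) := by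
      rw [← seq_singleton]
      exact seq_rename_of_forall_notMem_range (by simp [y]) _
    rw [seq_append, seq_singleton, AlgHom.comp_apply, map_mul, map_mul, hchain, algHom_C,
      AlgHom.commutes, map_mul, hfix]
    simp [step, y, map_list_prod, mul_assoc]

lemma realizable_monomial (m : σ →₀ ℕ) (a : R) : Realizable (monomial m a) := by
  have hdeg : (monomial m a).totalDegree ≤ m.toMultiset.toList.length := by
    rw [Multiset.length_toList, Finsupp.card_toMultiset]
    exact totalDegree_monomial_le m a
  have hprod : monomial m a = C a * (m.toMultiset.toList.map X).prod := by
    rw [prod_map_X_toList_toMultiset, C_mul_monomial, mul_one]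
  rcases hl : m.toMultiset.toList with _ | ⟨u, _ | ⟨v, xs⟩⟩ <;> rw [hl] at hdeg hprod
  · exact realizable_of_totalDegree_le_one (hdeg.trans zero_le_one)
  · exact realizable_of_totalDegree_le_one hdeg
  · exact hprod ▸ realizable_C_mul_prod_X a u v xs

lemma Realizable.add {p₁ p₂ : MvPolynomial σ R} (h₁ : Realizable p₁) (h₂ : Realizable p₂) :
    Realizable (p₁ + p₂) := by
  obtain ⟨k₁, q₁, L₁, hq₁, hL₁, hp₁⟩ := h₁
  obtain ⟨k₂, q₂, L₂, hq₂, hL₂, hp₂⟩ := h₂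
  set e₁ : σ ⊕ Fin k₁ → σ ⊕ Fin (k₁ + k₂) := Sum.map id (Fin.castAdd k₂)
  set e₂ : σ ⊕ Fin k₂ → σ ⊕ Fin (k₁ + k₂) := Sum.map id (Fin.natAdd k₁)
  have he₁ : e₁.Injective :=
    Sum.map_injective.2 ⟨Function.injective_id, Fin.castAdd_injective _ _⟩
  have he₂ : e₂.Injective :=
    Sum.map_injective.2 ⟨Function.injective_id, Fin.natAdd_injective _ _⟩
  set L₁' := L₁.map (Prod.map e₁ (Prod.map e₁ e₁))
  set L₂' := L₂.map (Prod.map e₂ (Prod.map e₂ e₂))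
  have hfix₁ : ∀ t ∈ L₁', t.1 ∉ Set.range e₂ := by
    rintro t ht ⟨i | i, hi⟩ <;>
      obtain ⟨j, hj⟩ := exists_fst_eq_inr_of_mem_map_sumMap _ hL₁ ht <;>
      simp [e₂, hj, Fin.ext_iff] at hi
    omega
  have hfix₂ : ∀ t ∈ L₂', t.1 ∉ Set.range (Sum.inl : σ → σ ⊕ Fin (k₁ + k₂)) := by
    rintro t ht ⟨i, hi⟩
    obtain ⟨j, hj⟩ := exists_fst_eq_inr_of_mem_map_sumMap _ hL₂ ht
    simp [hj] at hi
  refine ⟨k₁ + k₂, rename e₁ q₁ + rename e₂ q₂, L₁' ++ L₂', ?_, ?_, ?_⟩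
  · exact (totalDegree_add _ _).trans
      (max_le ((totalDegree_rename_le _ _).trans hq₁) ((totalDegree_rename_le _ _).trans hq₂))
  · intro t ht
    rcases List.mem_append.1 ht with ht | ht
    · obtain ⟨j, hj⟩ := exists_fst_eq_inr_of_mem_map_sumMap _ hL₁ ht
      exact ⟨_, hj⟩
    · obtain ⟨j, hj⟩ := exists_fst_eq_inr_of_mem_map_sumMap _ hL₂ ht
      exact ⟨_, hj⟩
  · have hinl₁ : e₁ ∘ Sum.inl = Sum.inl := rfl
    have hinl₂ : e₂ ∘ Sum.inl = Sum.inl := rfl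
    rw [seq_append, AlgHom.comp_apply, map_add, map_add, seq_map_rename he₁, hp₁,
      rename_rename, hinl₁, seq_rename_of_forall_notMem_range hfix₁, seq_map_rename he₂, hp₂,
      rename_rename, hinl₂, seq_rename_of_forall_notMem_range hfix₂, map_add]

theorem realizable (p : MvPolynomial σ R) : Realizable p := by
  induction p using MvPolynomial.induction_on' with
  | monomial m a => exact realizable_monomial m a
  | add p₁ p₂ h₁ h₂ => exact h₁.add h₂

end ProductSubst

open MvPolynomial in
theorem polynomial_realization {F : Type*} [Field F] {n : ℕ}
    (p : MvPolynomial (Fin n) F) :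
    ∃ (N : ℕ) (hn : n ≤ N) (q : MvPolynomial (Fin N) F)
      (L : List (Fin N × Fin N × Fin N)),
      q.totalDegree ≤ 1 ∧
      L.foldl (fun r t =>
          MvPolynomial.aeval (fun i : Fin N =>
            if i = t.1 then (X t.2.1 * X t.2.2 : MvPolynomial (Fin N) F) else X i) r) q
        = MvPolynomial.rename (Fin.castLE hn) p := by
  obtain ⟨k, q, L, hq, -, hL⟩ := ProductSubst.realizable p
  let e : Fin n ⊕ Fin k ≃ Fin (n + k) := finSumFinEquiv
  refine ⟨n + k, Nat.le_add_right n k, rename e q, L.map (Prod.map e (Prod.map e e)),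
    (totalDegree_rename_le _ _).trans hq, ?_⟩
  refine (ProductSubst.seq_apply_eq_foldl _ _).symm.trans ?_
  rw [ProductSubst.seq_map_rename e.injective, hL, rename_rename]
  rfl
end
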